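/- Let ⟨λ,ν⟩ be a nonspecial reduced marked partition of type X, and let a, l and ζ be as in the definition of the partial specialization map (a the smallest part of λ of the relevant parity and height with odd ν-height, l its multiplicity in λ, and ζ obtained from λ by replacing the l copies of a by a+1, a (l−2 times), a−1). Then ν is contained in ζ as a multiset, and d_S⟨ζ,ν⟩ = d_S⟨λ,ν⟩, where d_S⟨ζ,ν⟩ is computed from the pair (ν, η̃) with η̃ the partition determined by ν ∪ η̃ = ζ. -/
import Mathlib


namespace NilDual

/-- A "partition" is encoded as a multiset of natural numbers (its parts). -/
abbrev Ptn := Multiset ℕ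

/-- All parts are positive. -/
def IsPartition (l : Ptn) : Prop := ∀ a ∈ l, 0 < a

/-- `height l a` is the number of parts of `l` that are ≥ `a`. -/
def height (l : Ptn) (a : ℕ) : ℕ := Multiset.card (l.filter (fun p => a ≤ p))

/-- `psum l j` is the sum of the `j` largest parts of `l`. -/
def psum (l : Ptn) (j : ℕ) : ℕ := ∑ a ∈ Finset.Icc 1 l.sum, min j (height l a)

/-- `Dom l m` means `l ≤ m` in the dominance order. -/
def Dom (l m : Ptn) : Prop := ∀ j : ℕ, psum l j ≤ psum m j

/-- The transpose (conjugate) partition. -/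
def transpose (l : Ptn) : Ptn :=
  Multiset.filter (fun x => 0 < x)
    (Multiset.map (fun a => height l a) (Finset.Icc 1 l.sum).val)

/-- The largest part (0 for the empty partition). -/
def maxPart (l : Ptn) : ℕ := l.sup

/-- The smallest part (0 for the empty partition). -/
noncomputable def minPart (l : Ptn) : ℕ := sInf {a : ℕ | a ∈ l}

/-- `λ⁺`: add 1 to the largest part. -/
def up (l : Ptn) : Ptn := (maxPart l + 1) ::ₘ l.erase (maxPart l)

/-- `λ⁻`: subtract 1 from the smallest part, deleting it if it becomes 0. -/
noncomputable def down (l : Ptn) : Ptn :=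
  if minPart l ≤ 1 then l.erase (minPart l)
  else (minPart l - 1) ::ₘ l.erase (minPart l)

/-- The join `λ ∨ μ = (λ* ∪ μ*)*`. -/
def pjoin (l m : Ptn) : Ptn := transpose (transpose l + transpose m)

/-- `λ₋ = (λ*⁻)*`. -/
noncomputable def lowerStar (l : Ptn) : Ptn := transpose (down (transpose l))

inductive PType | B | C | D
deriving DecidableEq

/-- Parts of this parity must occur with even multiplicity in a partition of type `X`. -/
def badPart : PType → ℕ → Prop
  | PType.B, a => Even a
  | PType.C, a => Odd a
  | PType.D, a => Even a

/-- Membership in `𝒫_X` (sum unconstrained). -/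
def InP (X : PType) (l : Ptn) : Prop :=
  IsPartition l ∧ ∀ a : ℕ, badPart X a → Even (l.count a)

/-- The parity of `n` required for `𝒫_X(n)` to be defined. -/
def sumParity : PType → ℕ → Prop
  | PType.B, n => Odd n
  | PType.C, n => Even n
  | PType.D, n => Even n

/-- `m` is the X-collapse of `l`: `m ∈ 𝒫_X(|l|)`, `m ≤ l` in dominance order, and `m`
dominates every member of `𝒫_X(|l|)` that is dominated by `l`. -/
def IsCollapse (X : PType) (l m : Ptn) : Prop :=
  InP X m ∧ m.sum = l.sum ∧ Dom m l ∧
    ∀ ν : Ptn, InP X ν → ν.sum = l.sum → Dom ν l → Dom ν m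

def CollapseDefined (X : PType) (l : Ptn) : Prop := ∃ m, IsCollapse X l m

open Classical in
/-- The X-collapse `λ_X` (junk value `0` if it does not exist). -/
noncomputable def collapse (X : PType) (l : Ptn) : Ptn :=
  if h : CollapseDefined X l then h.choose else 0

/-- `l` is superior to `m`: smallest part of `l` ≥ largest part of `m`. -/
def Superior (l m : Ptn) : Prop := maxPart m ≤ minPart l

def EvenlySuperior (l m : Ptn) : Prop := ∃ k : ℕ, Even k ∧ maxPart m ≤ k ∧ k ≤ minPart l

def OddlySuperior (l m : Ptn) : Prop := ∃ k : ℕ, Odd k ∧ maxPart m ≤ k ∧ k ≤ minPart l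

/-- The parity required of marked parts in type `X`. -/
def markParity : PType → ℕ → Prop
  | PType.C, a => Even a
  | _, a => Odd a

/-- `(ν, η)` is a marked partition of type `X`, with underlying partition `λ = ν + η`. -/
def IsMarked (X : PType) (nu eta : Ptn) : Prop :=
  InP X (nu + eta) ∧ sumParity X (nu + eta).sum ∧
  (∀ a ∈ nu, nu.count a = 1 ∧ markParity X a) ∧
  ((X = PType.B ∨ X = PType.D) → Even (Multiset.card nu))

/-- The Sommers duality map `d_S` on marked partitions `(ν, η)`. -/
noncomputable def dS (X : PType) (nu eta : Ptn) : Ptn :=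
  match X with
  | PType.B => collapse PType.C (transpose (nu + collapse PType.C (down eta)))
  | PType.C => collapse PType.B (transpose (nu + collapse PType.B (up eta)))
  | PType.D =>
      collapse PType.D (transpose (nu + transpose (collapse PType.D (transpose eta))))

/-- `a` is a markable part of `l` in type `X`. -/
def Markable (X : PType) (l : Ptn) (a : ℕ) : Prop :=
  a ∈ l ∧ markParity X a ∧
    (match X with
     | PType.B => Odd (height l a)
     | PType.C => Even (height l a)
     | PType.D => Even (height l a))

/-- The marked partition `⟨l, ν⟩` is reduced. -/
def Reduced (X : PType) (l nu : Ptn) : Prop := ∀ a ∈ nu, Markable X l a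

/-- The parts entering the definition of a special marked partition:
even of odd height (B), odd of even height (C), even of even height (D). -/
def AntiPart (X : PType) (l : Ptn) (a : ℕ) : Prop :=
  match X with
  | PType.B => Even a ∧ Odd (height l a)
  | PType.C => Odd a ∧ Even (height l a)
  | PType.D => Even a ∧ Even (height l a)

/-- The reduced marked partition `⟨l, ν⟩` is special. -/
def SpecialMP (X : PType) (l nu : Ptn) : Prop :=
  ∀ a ∈ l, AntiPart X l a → Even (height nu a)

/-- `a` is the largest part of `l` whose height satisfies `P`. -/
def LargestWith (l : Ptn) (P : ℕ → Prop) (a : ℕ) : Prop :=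
  a ∈ l ∧ P (height l a) ∧ ∀ b ∈ l, P (height l b) → b ≤ a

/-- Height parity for the top marked part in a basic block. -/
def heightParity : PType → ℕ → Prop
  | PType.B => fun n => Odd n
  | _ => fun n => Even n

/-- A basic block of type `X`. -/
def BasicBlock (X : PType) (nu eta : Ptn) : Prop :=
  IsMarked X nu eta ∧
  ((∃ n1 n2 : ℕ, n1 < n2 ∧ nu = {n2, n1} ∧ n1 = minPart (nu + eta) ∧
      LargestWith (nu + eta) (heightParity X) n2) ∨
   (X = PType.C ∧ ∃ n2 : ℕ, nu = {n2} ∧ LargestWith (nu + eta) (heightParity X) n2))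

/-- An ultrabasic block: a basic block with `n₁ ≤ 1`. -/
def Ultrabasic (X : PType) (nu eta : Ptn) : Prop :=
  BasicBlock X nu eta ∧ (Multiset.card nu = 2 → minPart nu ≤ 1)


section Lemmas

-- basics
lemma height_cons (x b : ℕ) (l : Ptn) :
    height (x ::ₘ l) b = height l b + (if b ≤ x then 1 else 0) := by
  simp only [height, Multiset.filter_cons]
  split <;> simp [add_comm]

lemma height_add (l m : Ptn) (b : ℕ) : height (l + m) b = height l b + height m b := by
  simp [height, Multiset.filter_add]

lemma height_replicate (n x b : ℕ) : height (Multiset.replicate n x) b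
    = if b ≤ x then n else 0 := by
  induction n with
  | zero => simp [height]
  | succ n ih =>
    rw [Multiset.replicate_succ, height_cons, ih]
    split <;> simp

lemma height_zero (b : ℕ) : height 0 b = 0 := rfl

lemma height_anti (l : Ptn) {b b' : ℕ} (h : b ≤ b') : height l b' ≤ height l b := by
  apply Multiset.card_le_card
  apply Multiset.monotone_filter_right
  intro p hp; exact h.trans hp

lemma height_le_card (l : Ptn) (b : ℕ) : height l b ≤ Multiset.card l :=
  Multiset.card_le_card (Multiset.filter_le _ _)

lemma mem_le_sum {l : Ptn} {p : ℕ} (h : p ∈ l) : p ≤ l.sum :=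
  Multiset.le_sum_of_mem h  -- guess

lemma card_le_sum {l : Ptn} (h : IsPartition l) : Multiset.card l ≤ l.sum := by
  induction l using Multiset.induction_on with
  | empty => simp
  | cons x s ih =>
    simp only [Multiset.card_cons, Multiset.sum_cons]
    have hx := h x (Multiset.mem_cons_self _ _)
    have := ih (fun a ha => h a (Multiset.mem_cons_of_mem ha))
    omega

lemma height_eq_zero_of_gt {l : Ptn} {b : ℕ} (h : l.sum < b) : height l b = 0 := by
  rw [height, Multiset.card_eq_zero, Multiset.filter_eq_nil]
  intro p hp hbp
  exact absurd (le_trans hbp (mem_le_sum hp)) (by omega)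

lemma height_pos_le_sum {l : Ptn} {b : ℕ} (h : 0 < height l b) : b ≤ l.sum := by
  by_contra hc; rw [height_eq_zero_of_gt (by omega)] at h; omega

lemma height_count_succ (l : Ptn) (a : ℕ) :
    height l a = height l (a + 1) + l.count a := by
  induction l using Multiset.induction_on with
  | empty => simp [height]
  | cons x s ih =>
    rw [height_cons, height_cons, Multiset.count_cons, ih]
    split_ifs <;> omega


-- ==== section 2 ====
/-- psum over a larger index range. -/
def psumN (N : ℕ) (l : Ptn) (j : ℕ) : ℕ := ∑ b ∈ Finset.Icc 1 N, min j (height l b)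

lemma psum_eq_psumN {l : Ptn} {N : ℕ} (h : l.sum ≤ N) (j : ℕ) : psum l j = psumN N l j := by
  unfold psum psumN
  apply Finset.sum_subset
  · apply Finset.Icc_subset_Icc_right h
  · intro b hb hnb
    simp only [Finset.mem_Icc] at hb hnb
    rw [height_eq_zero_of_gt (by omega)]
    simp

/-- The `j`-th largest part. -/
def partAt (l : Ptn) (j : ℕ) : ℕ :=
  ((Finset.Icc 1 l.sum).filter (fun b => j ≤ height l b)).card

lemma psum_succ (l : Ptn) (j : ℕ) : psum l (j + 1) = psum l j + partAt l (j + 1) := by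
  unfold psum partAt
  rw [Finset.card_filter, ← Finset.sum_add_distrib]
  apply Finset.sum_congr rfl
  intro b _
  split_ifs with h <;> omega

lemma psum_zero (l : Ptn) : psum l 0 = 0 := by simp [psum]

lemma psum_mono (l : Ptn) {j j' : ℕ} (h : j ≤ j') : psum l j ≤ psum l j' := by
  unfold psum; apply Finset.sum_le_sum; intro b _; omega

lemma le_partAt_iff {l : Ptn} {b j : ℕ} (hb : 1 ≤ b) (hj : 1 ≤ j) :
    b ≤ partAt l j ↔ j ≤ height l b := by
  constructor
  · intro h
    by_contra hc
    push_neg at hc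
    have hsub : (Finset.Icc 1 l.sum).filter (fun c => j ≤ height l c) ⊆ Finset.Icc 1 (b - 1) := by
      intro c hcmem
      simp only [Finset.mem_filter, Finset.mem_Icc] at hcmem ⊢
      refine ⟨hcmem.1.1, ?_⟩
      by_contra hcb
      have : height l c ≤ height l b := height_anti l (by omega)
      omega
    have := Finset.card_le_card hsub
    rw [Nat.card_Icc] at this
    unfold partAt at h
    omega
  · intro h
    have hbs : b ≤ l.sum := by
      have h0 : 0 < height l b := by omega
      by_contra hc
      rw [height_eq_zero_of_gt (by omega)] at h0; omega
    have hsub : Finset.Icc 1 b ⊆ (Finset.Icc 1 l.sum).filter (fun c => j ≤ height l c) := by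
      intro c hcmem
      simp only [Finset.mem_Icc] at hcmem
      simp only [Finset.mem_filter, Finset.mem_Icc]
      exact ⟨⟨hcmem.1, le_trans hcmem.2 hbs⟩, le_trans h (height_anti l hcmem.2)⟩
    have := Finset.card_le_card hsub
    rw [Nat.card_Icc] at this
    unfold partAt
    omega

lemma partAt_le_of_lt_height {l : Ptn} {b j : ℕ} (hj : 1 ≤ j) (h : height l (b+1) < j) :
    partAt l j ≤ b := by
  by_contra hc
  have := (le_partAt_iff (l:=l) (by omega : 1 ≤ b+1) hj).1 (by omega)
  omega

/-- Sum of heights over a range covering all parts equals the sum. -/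
lemma heights_sum {l : Ptn} {N : ℕ} (h : ∀ p ∈ l, p ≤ N) :
    ∑ b ∈ Finset.Icc 1 N, height l b = l.sum := by
  induction l using Multiset.induction_on with
  | empty => simp [height]
  | cons x s ih =>
    have hx : x ≤ N := h x (Multiset.mem_cons_self _ _)
    have ihs := ih (fun p hp => h p (Multiset.mem_cons_of_mem hp))
    simp only [height_cons, Multiset.sum_cons]
    rw [Finset.sum_add_distrib, ihs, ← Finset.card_filter]
    have : (Finset.Icc 1 N).filter (fun b => b ≤ x) = Finset.Icc 1 x := by
      ext c; simp only [Finset.mem_filter, Finset.mem_Icc]; omega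
    rw [this, Nat.card_Icc]
    omega

/-- `psum` at the height cutoff equals the sum of the parts `≥ c`. -/
lemma psum_height_filter (l : Ptn) {c : ℕ} (hc : 1 ≤ c) :
    psum l (height l c) = (l.filter (fun p => c ≤ p)).sum := by
  have hparts : ∀ p ∈ l.filter (fun p => c ≤ p), p ≤ l.sum :=
    fun p hp => mem_le_sum (Multiset.mem_of_mem_filter hp)
  rw [← heights_sum hparts]
  unfold psum
  apply Finset.sum_congr rfl
  intro b hb
  simp only [Finset.mem_Icc] at hb
  have key : height (l.filter (fun p => c ≤ p)) b = height l (max b c) := by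
    unfold height
    rw [Multiset.filter_filter]
    congr 1
    apply Multiset.filter_congr
    intro p _
    constructor <;> intro h
    · omega
    · omega
  rw [key]
  rcases le_total b c with hbc | hbc
  · rw [max_eq_right hbc, min_eq_left (height_anti l hbc)]
  · rw [max_eq_left hbc, min_eq_right (height_anti l hbc)]

/-- Telescoping run: if all parts between positions `i+1 .. i+d` equal `a`. -/
lemma psum_run (l : Ptn) (a i : ℕ) :
    ∀ d : ℕ, (∀ j, i < j → j ≤ i + d → partAt l j = a) →
      psum l (i + d) = psum l i + d * a := by
  intro d
  induction d with
  | zero => simp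
  | succ d ih =>
    intro h
    have : i + (d+1) = (i + d) + 1 := by omega
    rw [this, psum_succ, ih (fun j hj hj' => h j hj (by omega)), h (i+d+1) (by omega) (by omega)]
    ring

-- === parity lemmas ===
lemma even_card_of_even_counts {l : Ptn} (h : ∀ b, Even (l.count b)) :
    Even (Multiset.card l) := by
  rw [← Multiset.toFinset_sum_count_eq]
  apply Finset.even_sum
  intro b _
  exact h b

lemma even_card_filter {l : Ptn} (Q : ℕ → Prop) [DecidablePred Q]
    (h : ∀ b, Q b → Even (l.count b)) :
    Even (Multiset.card (l.filter Q)) := by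
  apply even_card_of_even_counts
  intro b
  rw [Multiset.count_filter]
  split_ifs with hq
  · exact h b hq
  · exact Even.zero

lemma sum_mod_two (l : Ptn) :
    l.sum % 2 = Multiset.card (l.filter (fun x => x % 2 = 1)) % 2 := by
  induction l using Multiset.induction_on with
  | empty => simp
  | cons x s ih =>
    rw [Multiset.sum_cons, Multiset.filter_cons]
    split_ifs with hx
    · simp only [Multiset.card_add, Multiset.card_singleton]
      omega
    · rw [zero_add]
      omega

/-- filter by `c ≤ ·` splits off odd/even pieces; card of the `(c ≤ ·)` filter is `height`. -/
lemma filter_sum_mod_two (l : Ptn) (c : ℕ) :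
    (l.filter (fun p => c ≤ p)).sum % 2
      = Multiset.card (l.filter (fun p => p % 2 = 1 ∧ c ≤ p)) % 2 := by
  rw [sum_mod_two, Multiset.filter_filter]

lemma height_split_parity (l : Ptn) (c : ℕ) :
    height l c = Multiset.card (l.filter (fun p => p % 2 = 1 ∧ c ≤ p))
      + Multiset.card (l.filter (fun p => ¬(p % 2 = 1) ∧ c ≤ p)) := by
  unfold height
  have := Multiset.filter_add_not (fun p => p % 2 = 1) (Multiset.filter (fun p => c ≤ p) l)
  rw [Multiset.filter_filter, Multiset.filter_filter] at this
  rw [← this, Multiset.card_add]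

/-- For an "even parts paired" multiset, sum of parts `≥ c` has the parity of `height`. -/
lemma filter_sum_parity_evenpaired {m : Ptn} (hm : ∀ b, Even b → Even (m.count b)) (c : ℕ) :
    (m.filter (fun p => c ≤ p)).sum % 2 = height m c % 2 := by
  rw [filter_sum_mod_two, height_split_parity]
  have : Even (Multiset.card (m.filter (fun p => ¬(p % 2 = 1) ∧ c ≤ p))) := by
    apply even_card_filter
    intro b hb
    exact hm b (Nat.even_iff.mpr (by omega))
  rcases this with ⟨k, hk⟩
  omega

/-- For an "odd parts paired" multiset, sum of parts `≥ c` is even. -/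
lemma filter_sum_parity_oddpaired {m : Ptn} (hm : ∀ b, ¬ Even b → Even (m.count b)) (c : ℕ) :
    (m.filter (fun p => c ≤ p)).sum % 2 = 0 := by
  rw [filter_sum_mod_two]
  have : Even (Multiset.card (m.filter (fun p => p % 2 = 1 ∧ c ≤ p))) := by
    apply even_card_filter
    intro b hb
    exact hm b (fun hb2 => by rw [Nat.even_iff] at hb2; omega)
  rcases this with ⟨k, hk⟩
  omega

-- === finset surgery helpers ===
lemma sum_single_diff {s : Finset ℕ} {f g : ℕ → ℕ} {c : ℕ} (hc : c ∈ s)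
    (h : ∀ b ∈ s, b ≠ c → f b = g b) :
    ∑ b ∈ s, f b + g c = ∑ b ∈ s, g b + f c := by
  rw [← Finset.add_sum_erase s f hc, ← Finset.add_sum_erase s g hc]
  have : ∑ b ∈ s.erase c, f b = ∑ b ∈ s.erase c, g b :=
    Finset.sum_congr rfl (fun b hb => h b (Finset.mem_of_mem_erase hb) (Finset.ne_of_mem_erase hb))
  omega

lemma sum_double_diff {s : Finset ℕ} {f g : ℕ → ℕ} {c d : ℕ} (hc : c ∈ s) (hd : d ∈ s)
    (hcd : c ≠ d) (h : ∀ b ∈ s, b ≠ c → b ≠ d → f b = g b) :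
    ∑ b ∈ s, f b + (g c + g d) = ∑ b ∈ s, g b + (f c + f d) := by
  have hd' : d ∈ s.erase c := Finset.mem_erase.2 ⟨fun hh => hcd hh.symm, hd⟩
  rw [← Finset.add_sum_erase s f hc, ← Finset.add_sum_erase s g hc,
    ← Finset.add_sum_erase _ f hd', ← Finset.add_sum_erase _ g hd']
  have : ∑ b ∈ (s.erase c).erase d, f b = ∑ b ∈ (s.erase c).erase d, g b := by
    apply Finset.sum_congr rfl
    intro b hb
    exact h b (Finset.mem_of_mem_erase (Finset.mem_of_mem_erase hb))
      (Finset.ne_of_mem_erase (Finset.mem_of_mem_erase hb)) (Finset.ne_of_mem_erase hb)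
  omega

-- === max/min part lemmas ===
lemma le_maxPart {l : Ptn} {p : ℕ} (h : p ∈ l) : p ≤ maxPart l := Multiset.le_sup h

lemma maxPart_mem {l : Ptn} (h : l ≠ 0) : maxPart l ∈ l := by
  induction l using Multiset.induction_on with
  | empty => exact absurd rfl h
  | cons x s ih =>
    by_cases hs : s = 0
    · subst hs; simp [maxPart]
    · have : maxPart (x ::ₘ s) = max x (maxPart s) := by simp [maxPart]
      rw [this]
      rcases max_cases x (maxPart s) with ⟨he, _⟩ | ⟨he, _⟩
      · rw [he]; exact Multiset.mem_cons_self _ _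
      · rw [he]; exact Multiset.mem_cons_of_mem (ih hs)

lemma minPart_le {l : Ptn} {p : ℕ} (h : p ∈ l) : minPart l ≤ p := Nat.sInf_le h

lemma minPart_mem {l : Ptn} (h : l ≠ 0) : minPart l ∈ l := by
  rcases Multiset.exists_mem_of_ne_zero h with ⟨x, hx⟩
  have hne : {a : ℕ | a ∈ l}.Nonempty := ⟨x, hx⟩
  exact Nat.sInf_mem hne

lemma height_erase {l : Ptn} {x : ℕ} (h : x ∈ l) (b : ℕ) :
    height l b = height (l.erase x) b + (if b ≤ x then 1 else 0) := by
  conv_lhs => rw [← Multiset.cons_erase h]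
  rw [height_cons]

lemma sum_erase' {l : Ptn} {x : ℕ} (h : x ∈ l) : l.sum = x + (l.erase x).sum := by
  conv_lhs => rw [← Multiset.cons_erase h]
  rw [Multiset.sum_cons]

lemma height_maxPart_succ (l : Ptn) : height l (maxPart l + 1) = 0 := by
  rw [height, Multiset.card_eq_zero, Multiset.filter_eq_nil]
  intro p hp hc
  exact absurd (le_maxPart hp) (by omega)

lemma height_minPart (l : Ptn) (h : l ≠ 0) : height l (minPart l) = Multiset.card l := by
  rw [height, Multiset.filter_eq_self.2 (fun p hp => minPart_le hp)]

-- === up ===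
lemma sum_up {l : Ptn} (h : l ≠ 0) : (up l).sum = l.sum + 1 := by
  rw [up, Multiset.sum_cons]
  have := sum_erase' (maxPart_mem h)
  omega

lemma height_up {l : Ptn} (h : l ≠ 0) (b : ℕ) :
    height (up l) b = height l b + (if b = maxPart l + 1 then 1 else 0) := by
  rw [up, height_cons, height_erase (maxPart_mem h) b]
  have := height_maxPart_succ l
  split_ifs <;> omega

lemma psum_up {l : Ptn} (h : l ≠ 0) (j : ℕ) :
    psum (up l) j = psum l j + min j 1 := by
  have hM : maxPart l + 1 ∈ Finset.Icc 1 (l.sum + 1) := by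
    simp only [Finset.mem_Icc]
    exact ⟨by omega, by have := mem_le_sum (maxPart_mem h); omega⟩
  have h1 : psum (up l) j = psumN (l.sum + 1) (up l) j :=
    psum_eq_psumN (by rw [sum_up h]) j
  have h2 : psum l j = psumN (l.sum + 1) l j := psum_eq_psumN (by omega) j
  rw [h1, h2]
  have key := sum_single_diff (f := fun b => min j (height (up l) b))
    (g := fun b => min j (height l b)) hM
    (fun b _ hb => by
      show min j (height (up l) b) = min j (height l b)
      rw [height_up h, if_neg hb, add_zero])
  unfold psumN
  have e1 : height (up l) (maxPart l + 1) = 1 := by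
    rw [height_up h, if_pos rfl, height_maxPart_succ]
  have e2 : height l (maxPart l + 1) = 0 := height_maxPart_succ l
  rw [e1, e2] at key
  omega

-- === down ===
lemma minPart_pos {l : Ptn} (hpos : IsPartition l) (h : l ≠ 0) : 1 ≤ minPart l :=
  hpos _ (minPart_mem h)

lemma sum_down {l : Ptn} (hpos : IsPartition l) (h : l ≠ 0) : (down l).sum + 1 = l.sum := by
  have hm := minPart_mem h
  have h1 := minPart_pos hpos h
  have hse := sum_erase' hm
  rw [down]
  split_ifs with hc
  · have : minPart l = 1 := by omega
    omega
  · rw [Multiset.sum_cons]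
    omega

lemma height_down {l : Ptn} (hpos : IsPartition l) (h : l ≠ 0) {b : ℕ} (hb : 1 ≤ b) :
    height l b = height (down l) b + (if b = minPart l then 1 else 0) := by
  have hm := minPart_mem h
  have h1 := minPart_pos hpos h
  have he := height_erase hm b
  rw [down]
  by_cases hc : minPart l ≤ 1
  · rw [if_pos hc]
    split_ifs at he ⊢ <;> omega
  · rw [if_neg hc, height_cons]
    split_ifs at he ⊢ <;> omega

lemma psum_down {l : Ptn} (hpos : IsPartition l) (h : l ≠ 0) (j : ℕ) :
    psum (down l) j + (if Multiset.card l ≤ j then 1 else 0) = psum l j := by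
  have hm := minPart_mem h
  have h1 := minPart_pos hpos h
  have hM : minPart l ∈ Finset.Icc 1 l.sum := by
    simp only [Finset.mem_Icc]
    exact ⟨h1, mem_le_sum hm⟩
  have h2 : psum (down l) j = psumN l.sum (down l) j :=
    psum_eq_psumN (by have := sum_down hpos h; omega) j
  rw [h2]
  have key := sum_single_diff (f := fun b => min j (height (down l) b))
    (g := fun b => min j (height l b)) hM
    (fun b hb hbne => by
      simp only [Finset.mem_Icc] at hb
      show min j (height (down l) b) = min j (height l b)
      have := height_down hpos h (b := b) hb.1
      rw [if_neg hbne] at this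
      omega)
  have e0 : height l (minPart l) = Multiset.card l := height_minPart l h
  have e1 : height (down l) (minPart l) + 1 = Multiset.card l := by
    have := height_down hpos h (b := minPart l) h1
    rw [if_pos rfl] at this
    omega
  have hcard : 1 ≤ Multiset.card l := Multiset.card_pos.2 h
  rw [e0] at key
  have e1' : height (down l) (minPart l) = Multiset.card l - 1 := by omega
  rw [e1'] at key
  unfold psumN
  unfold psum
  split_ifs <;> omega

-- === transpose lemmas ===
lemma sum_filter_pos (s : Ptn) : (Multiset.filter (fun x => 0 < x) s).sum = s.sum := by
  induction s using Multiset.induction_on with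
  | empty => simp
  | cons x t ih =>
    rw [Multiset.filter_cons, Multiset.sum_cons]
    split_ifs with hx
    · rw [Multiset.sum_add, ih, Multiset.sum_singleton]
    · rw [zero_add, ih]
      omega

lemma transpose_sum (l : Ptn) : (transpose l).sum = l.sum := by
  rw [transpose, sum_filter_pos]
  have : ∀ p ∈ l, p ≤ l.sum := fun p hp => mem_le_sum hp
  rw [← Finset.sum_eq_multiset_sum]
  exact heights_sum this

lemma sum_heights_min {N : ℕ} (j : ℕ) {l : Ptn} (h : ∀ p ∈ l, p ≤ N) :
    ∑ b ∈ Finset.Icc 1 N, (if b ≤ j then height l b else 0) = (l.map (fun x => min j x)).sum := by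
  induction l using Multiset.induction_on with
  | empty => simp [height]
  | cons x s ih =>
    have hx : x ≤ N := h x (Multiset.mem_cons_self _ _)
    have ihs := ih (fun p hp => h p (Multiset.mem_cons_of_mem hp))
    simp only [height_cons, Multiset.map_cons, Multiset.sum_cons]
    have h5 : ∀ b ∈ Finset.Icc 1 N, (if b ≤ j then height s b + (if b ≤ x then 1 else 0) else 0)
        = (if b ≤ j then height s b else 0) + (if b ≤ j ∧ b ≤ x then 1 else 0) := by
      intro b _
      split_ifs <;> omega
    rw [Finset.sum_congr rfl h5, Finset.sum_add_distrib, ihs, ← Finset.card_filter]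
    have h6 : (Finset.Icc 1 N).filter (fun b => b ≤ j ∧ b ≤ x) = Finset.Icc 1 (min j x) := by
      ext b
      simp only [Finset.mem_filter, Finset.mem_Icc, le_min_iff]
      omega
    rw [h6, Nat.card_Icc]
    omega

lemma height_transpose (l : Ptn) {c : ℕ} (hc : 1 ≤ c) :
    height (transpose l) c = partAt l c := by
  rw [height, transpose, Multiset.filter_filter]
  have h1 : Multiset.filter (fun x => c ≤ x ∧ 0 < x)
      (Multiset.map (fun a => height l a) (Finset.Icc 1 l.sum).val)
      = Multiset.filter (fun x => c ≤ x) (Multiset.map (fun a => height l a) (Finset.Icc 1 l.sum).val) := by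
    apply Multiset.filter_congr
    intro x _
    constructor
    · rintro ⟨h, _⟩; exact h
    · intro h; exact ⟨h, by omega⟩
  rw [h1]
  rw [← Multiset.countP_eq_card_filter, Multiset.countP_map, partAt]
  rfl

lemma partAt_transpose {l : Ptn} (hpos : IsPartition l) {j : ℕ} (hj : 1 ≤ j) :
    partAt (transpose l) j = height l j := by
  unfold partAt
  rw [transpose_sum]
  have h1 : (Finset.Icc 1 l.sum).filter (fun c => j ≤ height (transpose l) c)
      = Finset.Icc 1 (height l j) := by
    ext c
    simp only [Finset.mem_filter, Finset.mem_Icc]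
    constructor
    · rintro ⟨⟨hc1, hc2⟩, hc3⟩
      rw [height_transpose l hc1] at hc3
      exact ⟨hc1, (le_partAt_iff hj hc1).1 hc3⟩
    · rintro ⟨hc1, hc2⟩
      have hcs : c ≤ l.sum := le_trans hc2 (le_trans (height_le_card l j) (card_le_sum hpos))
      refine ⟨⟨hc1, hcs⟩, ?_⟩
      rw [height_transpose l hc1]
      exact (le_partAt_iff hj hc1).2 hc2
  rw [h1, Nat.card_Icc]
  omega

lemma partAt_le_range (l : Ptn) (j : ℕ) : partAt l j ≤ l.sum := by
  unfold partAt
  have := Finset.card_filter_le (Finset.Icc 1 l.sum) (fun b => j ≤ height l b)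
  rw [Nat.card_Icc] at this
  omega

lemma psum_transpose (l : Ptn) (hpos : IsPartition l) (j : ℕ) :
    psum (transpose l) j = (l.map (fun x => min j x)).sum := by
  unfold psum
  rw [transpose_sum]
  have h1 : ∀ c ∈ Finset.Icc 1 l.sum, min j (height (transpose l) c)
      = ((Finset.Icc 1 l.sum).filter (fun b => b ≤ j ∧ c ≤ height l b)).card := by
    intro c hc
    simp only [Finset.mem_Icc] at hc
    rw [height_transpose l hc.1]
    have h2 : (Finset.Icc 1 l.sum).filter (fun b => b ≤ j ∧ c ≤ height l b)
        = Finset.Icc 1 (min j (partAt l c)) := by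
      ext b
      simp only [Finset.mem_filter, Finset.mem_Icc, le_min_iff]
      constructor
      · rintro ⟨⟨hb1, hb2⟩, hb3, hb4⟩
        exact ⟨hb1, hb3, (le_partAt_iff hb1 hc.1).2 hb4⟩
      · rintro ⟨hb1, hb2, hb3⟩
        have hbs : b ≤ l.sum := le_trans hb3 (partAt_le_range l c)
        exact ⟨⟨hb1, hbs⟩, hb2, (le_partAt_iff hb1 hc.1).1 hb3⟩
    rw [h2, Nat.card_Icc]
    omega
  rw [Finset.sum_congr rfl h1]
  -- swap double sum
  have h3 : ∀ c ∈ Finset.Icc 1 l.sum, ((Finset.Icc 1 l.sum).filter (fun b => b ≤ j ∧ c ≤ height l b)).card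
      = ∑ b ∈ Finset.Icc 1 l.sum, (if b ≤ j ∧ c ≤ height l b then 1 else 0) := by
    intro c _
    rw [Finset.card_filter]
  rw [Finset.sum_congr rfl h3, Finset.sum_comm]
  have h4 : ∀ b ∈ Finset.Icc 1 l.sum, (∑ c ∈ Finset.Icc 1 l.sum, if b ≤ j ∧ c ≤ height l b then 1 else 0)
      = if b ≤ j then height l b else 0 := by
    intro b hb
    split_ifs with hbj
    · have : ∀ c ∈ Finset.Icc 1 l.sum, (if b ≤ j ∧ c ≤ height l b then 1 else 0)
          = if c ≤ height l b then 1 else 0 := by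
        intro c _; split_ifs <;> omega
      rw [Finset.sum_congr rfl this, ← Finset.card_filter]
      have : (Finset.Icc 1 l.sum).filter (fun c => c ≤ height l b) = Finset.Icc 1 (height l b) := by
        ext c
        simp only [Finset.mem_filter, Finset.mem_Icc]
        have : height l b ≤ l.sum := le_trans (height_le_card l b) (card_le_sum hpos)
        omega
      rw [this, Nat.card_Icc]
      omega
    · apply Finset.sum_eq_zero
      intro c _
      simp [hbj]
  rw [Finset.sum_congr rfl h4]
  exact sum_heights_min j (fun p hp => mem_le_sum hp)

-- === uniqueness of partitions from psum, and collapse congruence ===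
lemma partAt_congr {l m : Ptn} (hp : ∀ j, psum l j = psum m j) {j : ℕ} (hj : 1 ≤ j) :
    partAt l j = partAt m j := by
  obtain ⟨j', rfl⟩ : ∃ j', j = j' + 1 := ⟨j - 1, by omega⟩
  have h1 := psum_succ l j'
  have h2 := psum_succ m j'
  have e1 := hp j'
  have e2 := hp (j' + 1)
  omega

lemma eq_of_psum_eq {l m : Ptn} (hl : IsPartition l) (hm : IsPartition m)
    (hp : ∀ j, psum l j = psum m j) : l = m := by
  have hh : ∀ b, 1 ≤ b → height l b = height m b := by
    intro b hb
    have key : ∀ (x y : Ptn), (∀ j, psum x j = psum y j) → height x b ≤ height y b := by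
      intro x y hxy
      by_cases h0 : height x b = 0
      · omega
      · have h1 : 1 ≤ height x b := by omega
        have h2 : b ≤ partAt x (height x b) := (le_partAt_iff hb h1).2 le_rfl
        rw [partAt_congr hxy h1] at h2
        exact (le_partAt_iff hb h1).1 h2
    exact le_antisymm (key l m hp) (key m l (fun j => (hp j).symm))
  ext b
  by_cases hb : b = 0
  · subst hb
    rw [Multiset.count_eq_zero.2 (fun hc => by exact absurd (hl 0 hc) (by omega)),
        Multiset.count_eq_zero.2 (fun hc => by exact absurd (hm 0 hc) (by omega))]
  · have e1 := height_count_succ l b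
    have e2 := height_count_succ m b
    have h1 := hh b (by omega)
    have h2 := hh (b + 1) (by omega)
    omega

lemma isCollapse_congr {X : PType} {l1 l2 m : Ptn} (hs : l1.sum = l2.sum)
    (h : ∀ ν : Ptn, InP X ν → ν.sum = l1.sum → (Dom ν l1 ↔ Dom ν l2))
    (hm : IsCollapse X l1 m) : IsCollapse X l2 m := by
  obtain ⟨h1, h2, h3, h4⟩ := hm
  refine ⟨h1, h2.trans hs, (h m h1 h2).1 h3, ?_⟩
  intro ν hν hνs hνd
  exact h4 ν hν (hνs.trans hs.symm) ((h ν hν (hνs.trans hs.symm)).2 hνd)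

lemma isCollapse_unique {X : PType} {l m m' : Ptn}
    (h : IsCollapse X l m) (h' : IsCollapse X l m') : m = m' := by
  have d1 : Dom m m' := h'.2.2.2 m h.1 (h.2.1.trans h'.2.1.symm ▸ h.2.1) h.2.2.1
  have d2 : Dom m' m := h.2.2.2 m' h'.1 h'.2.1 h'.2.2.1
  exact eq_of_psum_eq h.1.1 h'.1.1 (fun j => le_antisymm (d1 j) (d2 j))

lemma collapse_congr {X : PType} {l1 l2 : Ptn} (hs : l1.sum = l2.sum)
    (h : ∀ ν : Ptn, InP X ν → ν.sum = l1.sum → (Dom ν l1 ↔ Dom ν l2)) :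
    collapse X l1 = collapse X l2 := by
  have h' : ∀ ν : Ptn, InP X ν → ν.sum = l2.sum → (Dom ν l2 ↔ Dom ν l1) := by
    intro ν hν hνs
    exact (h ν hν (hνs.trans hs.symm)).symm
  unfold collapse
  by_cases h1 : CollapseDefined X l1
  · have h2 : CollapseDefined X l2 := ⟨h1.choose, isCollapse_congr hs h h1.choose_spec⟩
    rw [dif_pos h1, dif_pos h2]
    exact isCollapse_unique h1.choose_spec (isCollapse_congr hs.symm h' h2.choose_spec)
  · have h2 : ¬ CollapseDefined X l2 := by
      rintro ⟨m, hm⟩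
      exact h1 ⟨m, isCollapse_congr hs.symm h' hm⟩
    rw [dif_neg h1, dif_neg h2]

-- === window lemma (types B and C) ===
lemma window_lemma {p q m : Ptn} {a t l : ℕ} (ha : 1 ≤ a)
    (hq : ∀ j, psum q j = psum p j + (if t + 1 ≤ j ∧ j ≤ t + l - 1 then 1 else 0))
    (hpa : t + l - 1 ≤ height p a) (hpa2 : height p a ≤ t + l)
    (hpa1 : height p (a + 1) ≤ t + 1)
    (hl : 2 ≤ l)
    (hdom : Dom m q) (hnd : ¬ Dom m p) :
    ∃ j2, t + 1 ≤ j2 ∧ j2 ≤ t + l - 1 ∧ height m a = j2 ∧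
      psum m j2 = psum p j2 + 1 ∧
      psum p (height p a) = psum p j2 + (height p a - j2) * a := by
  classical
  -- violators
  have hviol : ∀ j, psum p j < psum m j → (t + 1 ≤ j ∧ j ≤ t + l - 1) := by
    intro j hj
    have := hdom j
    have := hq j
    split_ifs at this with hw
    · exact hw
    · omega
  obtain ⟨j0, hj0⟩ : ∃ j, psum p j < psum m j := by
    by_contra hc
    push_neg at hc
    exact hnd (fun j => hc j)
  set V : Finset ℕ := (Finset.Icc (t+1) (t+l-1)).filter (fun j => psum p j < psum m j) with hV
  have hj0V : j0 ∈ V := by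
    simp only [hV, Finset.mem_filter, Finset.mem_Icc]
    exact ⟨hviol j0 hj0, hj0⟩
  have hVne : V.Nonempty := ⟨j0, hj0V⟩
  set j2 := V.max' hVne with hj2def
  have hj2V : j2 ∈ V := V.max'_mem hVne
  have hj2w : t + 1 ≤ j2 ∧ j2 ≤ t + l - 1 := by
    have := hj2V
    simp only [hV, Finset.mem_filter, Finset.mem_Icc] at this
    exact this.1
  have hj2v : psum p j2 < psum m j2 := by
    have := hj2V
    simp only [hV, Finset.mem_filter, Finset.mem_Icc] at this
    exact this.2
  have hnov : ∀ j, j2 < j → psum m j ≤ psum p j := by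
    intro j hj
    by_contra hc
    push_neg at hc
    have hjV : j ∈ V := by
      simp only [hV, Finset.mem_filter, Finset.mem_Icc]
      exact ⟨hviol j hc, hc⟩
    exact absurd (V.le_max' j hjV) (by omega)
  have heq : psum m j2 = psum p j2 + 1 := by
    have h1 := hdom j2
    have h2 := hq j2
    rw [if_pos hj2w] at h2
    omega
  -- j2 = height m a
  have hup : height m a ≤ j2 := by
    have h1 := hnov (j2 + 1) (by omega)
    have h2 := psum_succ m j2
    have h3 := psum_succ p j2
    have h4 : partAt m (j2+1) + 1 ≤ partAt p (j2+1) := by omega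
    have h5 : partAt p (j2 + 1) ≤ a :=
      partAt_le_of_lt_height (by omega) (by omega)
    by_contra hc
    have := (le_partAt_iff (l := m) (b := a) ha (by omega : 1 ≤ j2 + 1)).2 (by omega)
    omega
  have hlow : j2 ≤ height m a := by
    obtain ⟨j1, hj1⟩ : ∃ j1, j2 = j1 + 1 := ⟨j2 - 1, by omega⟩
    have h1 : psum m j1 ≤ psum p j1 + 1 := by
      have := hdom j1
      have := hq j1
      split_ifs at * <;> omega
    have h2 := psum_succ m j1
    have h3 := psum_succ p j1
    rw [← hj1] at h2 h3
    have h4 : a ≤ partAt p j2 := by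
      apply (le_partAt_iff ha (by omega : 1 ≤ j2)).2
      omega
    apply (le_partAt_iff ha (by omega : 1 ≤ j2)).1
    omega
  have hK : height m a = j2 := by omega
  refine ⟨j2, hj2w.1, hj2w.2, hK, heq, ?_⟩
  -- run of parts equal to a
  have hrun : psum p (j2 + (height p a - j2)) = psum p j2 + (height p a - j2) * a := by
    apply psum_run
    intro j hja hjb
    have h1 : a ≤ partAt p j := by
      apply (le_partAt_iff ha (by omega : 1 ≤ j)).2
      omega
    have h2 : partAt p j ≤ a := partAt_le_of_lt_height (by omega) (by omega)
    omega
  have : j2 + (height p a - j2) = height p a := by omega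
  rw [this] at hrun
  exact hrun

-- === point lemma (type D) ===
lemma point_lemma {p q m : Ptn} {a c : ℕ} (ha : 1 ≤ a) (hc : 1 ≤ c)
    (hq : ∀ j, psum p j = psum q j + (if j = a then 1 else 0))
    (hpa : c ≤ partAt p a) (hpa1 : partAt p (a + 1) + 1 ≤ c)
    (hdom : Dom m p) (hnd : ¬ Dom m q) :
    height m c = a ∧ psum m a = psum p a := by
  obtain ⟨j0, hj0⟩ : ∃ j, psum q j < psum m j := by
    by_contra hcon
    push_neg at hcon
    exact hnd (fun j => hcon j)
  have hj0a : j0 = a := by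
    have h1 := hdom j0
    have h2 := hq j0
    split_ifs at h2 with hw
    · exact hw
    · omega
  subst hj0a
  have heq : psum m j0 = psum p j0 := by
    have h1 := hdom j0
    have h2 := hq j0
    rw [if_pos rfl] at h2
    omega
  obtain ⟨a', ha'⟩ : ∃ a', j0 = a' + 1 := ⟨j0 - 1, by omega⟩
  have h2 := psum_succ m a'
  have h3 := psum_succ p a'
  rw [← ha'] at h2 h3
  have h4 : psum m a' ≤ psum p a' := hdom a'
  have h5 : partAt p j0 ≤ partAt m j0 := by omega
  have h6 : psum m (j0 + 1) ≤ psum p (j0 + 1) := hdom (j0 + 1)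
  have h7 := psum_succ m j0
  have h8 := psum_succ p j0
  have h9 : partAt m (j0 + 1) ≤ partAt p (j0 + 1) := by omega
  constructor
  · apply le_antisymm
    · by_contra hcon
      push_neg at hcon
      have := (le_partAt_iff (l := m) (b := c) hc (by omega : 1 ≤ j0 + 1)).2 (by omega)
      omega
    · apply (le_partAt_iff hc (by omega : 1 ≤ j0)).1
      omega
  · exact heq

-- === misc helpers ===
lemma height_one {l : Ptn} (hpos : IsPartition l) : height l 1 = Multiset.card l := by
  unfold height
  congr 1
  apply Multiset.filter_eq_self.2
  intro p hp
  exact hpos p hp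

lemma two_le_height_sum {eta : Ptn} {a : ℕ} (ha : 1 ≤ a) (h : 2 ≤ height eta a) :
    a + 1 ≤ eta.sum := by
  have h1 : (eta.filter (fun p => a ≤ p)).sum ≤ eta.sum := by
    obtain ⟨u, hu⟩ := Multiset.le_iff_exists_add.1 (Multiset.filter_le (fun p => a ≤ p) eta)
    conv_rhs => rw [hu]
    rw [Multiset.sum_add]
    omega
  have h2 : Multiset.card (eta.filter (fun p => a ≤ p)) • a ≤ (eta.filter (fun p => a ≤ p)).sum :=
    Multiset.card_nsmul_le_sum (fun x hx => Multiset.of_mem_filter hx)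
  rw [smul_eq_mul] at h2
  have : 2 * a ≤ height eta a * a := Nat.mul_le_mul_right a h
  rw [height] at h
  nlinarith [h2, h1]

lemma card_filter_ext {s : Ptn} {P Q : ℕ → Prop} [DecidablePred P] [DecidablePred Q]
    (h : ∀ x ∈ s, P x ↔ Q x) :
    Multiset.card (s.filter P) = Multiset.card (s.filter Q) := by
  rw [Multiset.filter_congr h]

lemma card_filter_split (s : Ptn) (P Q : ℕ → Prop) [DecidablePred P] [DecidablePred Q] :
    Multiset.card (s.filter P)
      = Multiset.card (s.filter (fun x => Q x ∧ P x))
        + Multiset.card (s.filter (fun x => ¬ Q x ∧ P x)) := by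
  have := Multiset.filter_add_not Q (s.filter P)
  rw [Multiset.filter_filter, Multiset.filter_filter] at this
  rw [← this, Multiset.card_add]

lemma filter_sum_up {eta : Ptn} (h0 : eta ≠ 0) {a : ℕ} (haM : a ≤ maxPart eta) :
    ((up eta).filter (fun p => a ≤ p)).sum = (eta.filter (fun p => a ≤ p)).sum + 1 := by
  have hm := maxPart_mem h0
  conv_rhs => rw [← Multiset.cons_erase hm]
  rw [up, Multiset.filter_cons, Multiset.filter_cons,
    if_pos (by omega : a ≤ maxPart eta + 1), if_pos haM]
  simp only [Multiset.sum_add, Multiset.sum_singleton]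
  omega

lemma filter_sum_down {eta : Ptn} (h0 : eta ≠ 0) (hpos : IsPartition eta) {a : ℕ}
    (ha2 : 2 ≤ a) (hm0 : minPart eta ≤ a) :
    (eta.filter (fun p => a ≤ p)).sum
      = ((down eta).filter (fun p => a ≤ p)).sum + (if minPart eta = a then a else 0) := by
  have hm := minPart_mem h0
  have h1 := minPart_pos hpos h0
  conv_lhs => rw [← Multiset.cons_erase hm]
  rw [Multiset.filter_cons, down]
  by_cases hc : minPart eta ≤ 1
  · rw [if_pos hc, if_neg (by omega : ¬ a ≤ minPart eta), if_neg (by omega : ¬ minPart eta = a),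
      zero_add, add_zero]
  · rw [if_neg hc, Multiset.filter_cons, if_neg (by omega : ¬ a ≤ minPart eta - 1), zero_add]
    by_cases he : minPart eta = a
    · rw [if_pos (by omega : a ≤ minPart eta), if_pos he]
      simp only [Multiset.sum_add, Multiset.sum_singleton]
      omega
    · rw [if_neg (by omega : ¬ a ≤ minPart eta), if_neg he, zero_add, add_zero]

-- === psum of the tilde move ===
lemma psum_tilde {eta etaNew : Ptn} {a t l : ℕ}
    (hsum : etaNew.sum = eta.sum)
    (hH : ∀ b, 1 ≤ b → height etaNew b + (if b = a then 1 else 0)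
        = height eta b + (if b = a + 1 then 1 else 0))
    (ha1 : 1 ≤ a) (haN : a + 1 ≤ eta.sum)
    (hha : height eta a = t + l) (hha1 : height eta (a + 1) = t) (hl : 2 ≤ l) :
    ∀ j, psum etaNew j = psum eta j + (if t + 1 ≤ j ∧ j ≤ t + l - 1 then 1 else 0) := by
  intro j
  have hNa : a ∈ Finset.Icc 1 eta.sum := by simp only [Finset.mem_Icc]; omega
  have hNa1 : a + 1 ∈ Finset.Icc 1 eta.sum := by simp only [Finset.mem_Icc]; omega
  have h1 : psum etaNew j = psumN eta.sum etaNew j := psum_eq_psumN (le_of_eq hsum) j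
  rw [h1]
  have key := sum_double_diff (f := fun b => min j (height etaNew b))
      (g := fun b => min j (height eta b)) hNa hNa1 (by omega)
      (fun b hb hb1 hb2 => by
        show min j (height etaNew b) = min j (height eta b)
        simp only [Finset.mem_Icc] at hb
        have := hH b hb.1
        rw [if_neg hb1, if_neg hb2] at this
        omega)
  have e1 : height etaNew a = t + l - 1 := by
    have := hH a ha1
    rw [if_pos rfl, if_neg (by omega)] at this
    omega
  have e2 : height etaNew (a + 1) = t + 1 := by
    have := hH (a + 1) (by omega)
    rw [if_neg (by omega), if_pos rfl] at this
    omega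
  rw [hha, hha1, e1, e2] at key
  unfold psumN psum
  split_ifs <;> omega

lemma partAt_tilde {eta etaNew : Ptn} {a t l : ℕ}
    (hsum : etaNew.sum = eta.sum)
    (hH : ∀ b, 1 ≤ b → height etaNew b + (if b = a then 1 else 0)
        = height eta b + (if b = a + 1 then 1 else 0))
    (ha1 : 1 ≤ a) (haN : a + 1 ≤ eta.sum)
    (hha : height eta a = t + l) (hha1 : height eta (a + 1) = t) (hl : 2 ≤ l) :
    ∀ c, 1 ≤ c → partAt etaNew c + (if c = t + l then 1 else 0)
      = partAt eta c + (if c = t + 1 then 1 else 0) := by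
  intro c hc
  have hNa : a ∈ Finset.Icc 1 eta.sum := by simp only [Finset.mem_Icc]; omega
  have hNa1 : a + 1 ∈ Finset.Icc 1 eta.sum := by simp only [Finset.mem_Icc]; omega
  have hrange : partAt etaNew c
      = ((Finset.Icc 1 eta.sum).filter (fun b => c ≤ height etaNew b)).card := by
    unfold partAt; rw [hsum]
  rw [hrange]
  unfold partAt
  rw [Finset.card_filter, Finset.card_filter]
  have key := sum_double_diff (f := fun b => if c ≤ height etaNew b then 1 else 0)
      (g := fun b => if c ≤ height eta b then 1 else 0) hNa hNa1 (by omega)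
      (fun b hb hb1 hb2 => by
        show (if c ≤ height etaNew b then 1 else 0) = (if c ≤ height eta b then 1 else 0)
        simp only [Finset.mem_Icc] at hb
        have := hH b hb.1
        rw [if_neg hb1, if_neg hb2] at this
        have he : height etaNew b = height eta b := by omega
        rw [he])
  have e1 : height etaNew a = t + l - 1 := by
    have := hH a ha1
    rw [if_pos rfl, if_neg (by omega)] at this
    omega
  have e2 : height etaNew (a + 1) = t + 1 := by
    have := hH (a + 1) (by omega)
    rw [if_neg (by omega), if_pos rfl] at this
    omega
  rw [hha, hha1, e1, e2] at key
  split_ifs at key ⊢ <;> omega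

lemma psum_transpose_tilde {eta etaNew : Ptn} {a t l : ℕ}
    (hpose : IsPartition eta)
    (hsum : etaNew.sum = eta.sum)
    (hH : ∀ b, 1 ≤ b → height etaNew b + (if b = a then 1 else 0)
        = height eta b + (if b = a + 1 then 1 else 0))
    (ha1 : 1 ≤ a) (haN : a + 1 ≤ eta.sum)
    (hha : height eta a = t + l) (hha1 : height eta (a + 1) = t) (hl : 2 ≤ l) :
    ∀ j, psum (transpose eta) j = psum (transpose etaNew) j + (if j = a then 1 else 0) := by
  intro j
  have hT := partAt_tilde hsum hH ha1 haN hha hha1 hl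
  have htl : t + l ≤ eta.sum := by
    have h1 : height eta a ≤ Multiset.card eta := height_le_card eta a
    have h2 : Multiset.card eta ≤ eta.sum := card_le_sum hpose
    omega
  have hr1 : psum (transpose eta) j = ∑ c ∈ Finset.Icc 1 eta.sum, min j (partAt eta c) := by
    unfold psum
    rw [transpose_sum]
    exact Finset.sum_congr rfl (fun c hcm => by
      simp only [Finset.mem_Icc] at hcm
      rw [height_transpose eta hcm.1])
  have hr2 : psum (transpose etaNew) j
      = ∑ c ∈ Finset.Icc 1 eta.sum, min j (partAt etaNew c) := by
    unfold psum
    rw [transpose_sum, hsum]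
    exact Finset.sum_congr rfl (fun c hcm => by
      simp only [Finset.mem_Icc] at hcm
      rw [height_transpose etaNew hcm.1])
  rw [hr1, hr2]
  have hc1 : t + 1 ∈ Finset.Icc 1 eta.sum := by simp only [Finset.mem_Icc]; omega
  have hc2 : t + l ∈ Finset.Icc 1 eta.sum := by simp only [Finset.mem_Icc]; omega
  have hv1 : partAt eta (t + 1) = a := by
    apply le_antisymm
    · exact partAt_le_of_lt_height (by omega) (by omega)
    · exact (le_partAt_iff ha1 (by omega)).2 (by omega)
  have hv2 : partAt eta (t + l) = a := by
    apply le_antisymm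
    · exact partAt_le_of_lt_height (by omega) (by omega)
    · exact (le_partAt_iff ha1 (by omega)).2 (by omega)
  have hv3 : partAt etaNew (t + 1) = a + 1 := by
    have := hT (t + 1) (by omega)
    rw [if_neg (by omega), if_pos rfl] at this
    omega
  have hv4 : partAt etaNew (t + l) = a - 1 := by
    have := hT (t + l) (by omega)
    rw [if_pos rfl, if_neg (by omega)] at this
    omega
  have key := sum_double_diff (f := fun c => min j (partAt eta c))
      (g := fun c => min j (partAt etaNew c)) hc1 hc2 (by omega)
      (fun c hcm h1 h2 => by
        show min j (partAt eta c) = min j (partAt etaNew c)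
        simp only [Finset.mem_Icc] at hcm
        have := hT c hcm.1
        rw [if_neg h2, if_neg h1] at this
        omega)
  rw [hv1, hv2, hv3, hv4] at key
  split_ifs <;> omega

lemma sum_map_min_parity {eta : Ptn} {a : ℕ} (haeven : a % 2 = 0) :
    (eta.map (fun x => min a x)).sum % 2
      = Multiset.card (eta.filter (fun x => x % 2 = 1 ∧ ¬ a ≤ x)) % 2 := by
  rw [sum_mod_two]
  congr 1
  rw [← Multiset.countP_eq_card_filter, Multiset.countP_map]
  apply card_filter_ext
  intro x _
  constructor <;> intro h <;> omega

-- === wrappers around window/point lemmas ===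
lemma domEquiv_window {p q m : Ptn} {a t l : ℕ}
    (ha : 1 ≤ a) (hl : 2 ≤ l)
    (hq : ∀ j, psum q j = psum p j + (if t + 1 ≤ j ∧ j ≤ t + l - 1 then 1 else 0))
    (hpa : t + l - 1 ≤ height p a) (hpa2 : height p a ≤ t + l)
    (hpa1 : height p (a + 1) ≤ t + 1)
    (hparity : ∀ j2, t + 1 ≤ j2 → j2 ≤ t + l - 1 → height m a = j2 →
        psum m j2 = psum p j2 + 1 →
        psum p (height p a) = psum p j2 + (height p a - j2) * a → False) :
    Dom m p ↔ Dom m q := by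
  constructor
  · intro hd j
    have h1 := hd j
    have h2 := hq j
    split_ifs at h2 <;> omega
  · intro hd
    by_contra hnd
    obtain ⟨j2, h1, h2, h3, h4, h5⟩ := window_lemma ha hq hpa hpa2 hpa1 hl hd hnd
    exact hparity j2 h1 h2 h3 h4 h5

lemma domEquiv_point {p q m : Ptn} {a c : ℕ} (ha : 1 ≤ a) (hc : 1 ≤ c)
    (hq : ∀ j, psum p j = psum q j + (if j = a then 1 else 0))
    (hpa : c ≤ partAt p a) (hpa1 : partAt p (a + 1) + 1 ≤ c)
    (hparity : height m c = a → psum m a = psum p a → False) :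
    Dom m p ↔ Dom m q := by
  constructor
  · intro hd
    by_contra hnd
    obtain ⟨h1, h2⟩ := point_lemma ha hc hq hpa hpa1 hd hnd
    exact hparity h1 h2
  · intro hd j
    have h1 := hd j
    have h2 := hq j
    split_ifs at h2 <;> omega

-- === per-type core equivalences ===
lemma core_C {eta etaNew : Ptn} {a l t : ℕ}
    (h0 : eta ≠ 0) (h0' : etaNew ≠ 0)
    (ha1 : 1 ≤ a) (haodd : a % 2 = 1) (hl2 : 2 ≤ l) (hleven : l % 2 = 0)
    (hha : height eta a = t + l) (hha1 : height eta (a + 1) = t)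
    (haM : a ≤ maxPart eta)
    (hsum : etaNew.sum = eta.sum)
    (hH : ∀ b, 1 ≤ b → height etaNew b + (if b = a then 1 else 0)
        = height eta b + (if b = a + 1 then 1 else 0))
    (htodd : t % 2 = 1)
    (hSeta : (eta.filter (fun p => a ≤ p)).sum % 2 = 0)
    (m : Ptn) (hm : ∀ b : ℕ, Even b → Even (m.count b)) :
    Dom m (up eta) ↔ Dom m (up etaNew) := by
  have haN : a + 1 ≤ eta.sum := two_le_height_sum ha1 (by omega)
  have htild := psum_tilde hsum hH ha1 haN hha hha1 hl2
  have hq : ∀ j, psum (up etaNew) j = psum (up eta) j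
      + (if t + 1 ≤ j ∧ j ≤ t + l - 1 then 1 else 0) := by
    intro j
    have h1 := psum_up h0 j
    have h2 := psum_up h0' j
    have h3 := htild j
    split_ifs at * <;> omega
  have hMa : a ≠ maxPart eta + 1 := by omega
  have hKp : height (up eta) a = t + l := by
    have h := height_up h0 a
    rw [if_neg hMa] at h
    omega
  have hpa1 : height (up eta) (a + 1) ≤ t + 1 := by
    have h := height_up h0 (a + 1)
    split_ifs at h <;> omega
  apply domEquiv_window ha1 hl2 hq (by omega) (by omega) hpa1
  intro j2 hj2a hj2b hj3 hj4 hj5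
  have hm1 : psum m j2 = (m.filter (fun x => a ≤ x)).sum := by
    have := psum_height_filter m (c := a) ha1
    rw [hj3] at this
    exact this
  have hm2 : (m.filter (fun x => a ≤ x)).sum % 2 = height m a % 2 :=
    filter_sum_parity_evenpaired hm a
  have hp1 : psum (up eta) (height (up eta) a) = ((up eta).filter (fun x => a ≤ x)).sum :=
    psum_height_filter (up eta) ha1
  have hsp := filter_sum_up h0 haM
  have hmul : ((height (up eta) a - j2) * a) % 2 = (height (up eta) a - j2) % 2 := by
    rcases Nat.even_or_odd (height (up eta) a - j2) with he | ho
    · have h2 : Even ((height (up eta) a - j2) * a) := he.mul_right a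
      rw [Nat.even_iff] at he h2
      omega
    · have h2 : Odd ((height (up eta) a - j2) * a) := ho.mul (Nat.odd_iff.2 haodd)
      rw [Nat.odd_iff] at ho h2
      omega
  rw [hj3] at hm2
  omega

lemma core_B {eta etaNew : Ptn} {a l t : ℕ}
    (hpose : IsPartition eta) (hposeN : IsPartition etaNew)
    (h0 : eta ≠ 0) (h0' : etaNew ≠ 0)
    (ha2 : 2 ≤ a) (haeven : a % 2 = 0) (hl2 : 2 ≤ l) (hleven : l % 2 = 0)
    (hha : height eta a = t + l) (hha1 : height eta (a + 1) = t)
    (hm0a : minPart eta ≤ a)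
    (hsum : etaNew.sum = eta.sum)
    (hH : ∀ b, 1 ≤ b → height etaNew b + (if b = a then 1 else 0)
        = height eta b + (if b = a + 1 then 1 else 0))
    (hSeta : (eta.filter (fun p => a ≤ p)).sum % 2 = 0)
    (m : Ptn) (hm : ∀ b : ℕ, ¬ Even b → Even (m.count b)) :
    Dom m (down eta) ↔ Dom m (down etaNew) := by
  have ha1 : 1 ≤ a := by omega
  have haN : a + 1 ≤ eta.sum := two_le_height_sum ha1 (by omega)
  have htild := psum_tilde hsum hH ha1 haN hha hha1 hl2
  have hcard : Multiset.card etaNew = Multiset.card eta := by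
    have h := hH 1 le_rfl
    rw [if_neg (by omega), if_neg (by omega)] at h
    rw [← height_one hpose, ← height_one hposeN]
    omega
  have hq : ∀ j, psum (down etaNew) j = psum (down eta) j
      + (if t + 1 ≤ j ∧ j ≤ t + l - 1 then 1 else 0) := by
    intro j
    have h1 := psum_down hpose h0 j
    have h2 := psum_down hposeN h0' j
    have h3 := htild j
    rw [hcard] at h2
    split_ifs at * <;> omega
  have hdha := height_down hpose h0 (b := a) ha1
  have hdha1 := height_down hpose h0 (b := a + 1) (by omega)
  rw [if_neg (by omega : ¬ a + 1 = minPart eta)] at hdha1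
  have hpa : t + l - 1 ≤ height (down eta) a := by split_ifs at hdha <;> omega
  have hpa2 : height (down eta) a ≤ t + l := by split_ifs at hdha <;> omega
  have hpa1 : height (down eta) (a + 1) ≤ t + 1 := by omega
  apply domEquiv_window ha1 hl2 hq hpa hpa2 hpa1
  intro j2 hj2a hj2b hj3 hj4 hj5
  have hm1 : psum m j2 = (m.filter (fun x => a ≤ x)).sum := by
    have := psum_height_filter m (c := a) ha1
    rw [hj3] at this
    exact this
  have hm2 : (m.filter (fun x => a ≤ x)).sum % 2 = 0 :=
    filter_sum_parity_oddpaired hm a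
  have hp1 : psum (down eta) (height (down eta) a)
      = ((down eta).filter (fun x => a ≤ x)).sum :=
    psum_height_filter (down eta) ha1
  have hsp := filter_sum_down h0 hpose ha2 hm0a
  have hmul : ((height (down eta) a - j2) * a) % 2 = 0 := by
    have h2 : Even ((height (down eta) a - j2) * a) :=
      (Nat.even_iff.2 haeven).mul_left _
    rw [Nat.even_iff] at h2
    exact h2
  split_ifs at hsp <;> omega

lemma core_D {eta etaNew : Ptn} {a l t : ℕ}
    (hpose : IsPartition eta)
    (ha1 : 1 ≤ a) (haeven : a % 2 = 0) (hl2 : 2 ≤ l)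
    (hha : height eta a = t + l) (hha1 : height eta (a + 1) = t)
    (hsum : etaNew.sum = eta.sum)
    (hH : ∀ b, 1 ≤ b → height etaNew b + (if b = a then 1 else 0)
        = height eta b + (if b = a + 1 then 1 else 0))
    (hOddLt : Multiset.card (eta.filter (fun x => x % 2 = 1 ∧ ¬ a ≤ x)) % 2 = 1)
    (m : Ptn) (hm : ∀ b : ℕ, Even b → Even (m.count b)) :
    Dom m (transpose eta) ↔ Dom m (transpose etaNew) := by
  have haN : a + 1 ≤ eta.sum := two_le_height_sum ha1 (by omega)
  have hq := psum_transpose_tilde hpose hsum hH ha1 haN hha hha1 hl2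
  have hpa : t + l ≤ partAt (transpose eta) a := by
    rw [partAt_transpose hpose ha1]
    omega
  have hpa1 : partAt (transpose eta) (a + 1) + 1 ≤ t + l := by
    rw [partAt_transpose hpose (by omega)]
    omega
  apply domEquiv_point ha1 (by omega : 1 ≤ t + l) hq hpa hpa1
  intro h1 h2
  have hm1 : psum m a = (m.filter (fun x => t + l ≤ x)).sum := by
    have := psum_height_filter m (c := t + l) (by omega)
    rw [h1] at this
    exact this
  have hm2 : (m.filter (fun x => t + l ≤ x)).sum % 2 = height m (t + l) % 2 :=
    filter_sum_parity_evenpaired hm (t + l)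
  rw [h1] at hm2
  have hp2 : psum (transpose eta) a = (eta.map (fun x => min a x)).sum :=
    psum_transpose eta hpose a
  have hp3 := sum_map_min_parity (eta := eta) haeven
  omega

-- === bookkeeping for the zeta construction ===
lemma main_common {nu eta : Ptn} {a l : ℕ} {zeta : Ptn}
    (hzeta : zeta = ((a + 1) ::ₘ (Multiset.replicate (l - 2) a +
        (if a ≤ 1 then (0 : Ptn) else {a - 1}))) +
        Multiset.filter (fun b => b ≠ a) (nu + eta))
    (hanu : a ∉ nu)
    (hl : l = (nu + eta).count a)
    (hl2 : 2 ≤ l)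
    (ha1 : 1 ≤ a)
    (hpose : IsPartition eta) :
    ∃ etaNew : Ptn, zeta = nu + etaNew ∧ zeta - nu = etaNew ∧ nu ≤ zeta ∧
      etaNew.sum = eta.sum ∧ IsPartition etaNew ∧ etaNew ≠ 0 ∧ eta ≠ 0 ∧
      eta.count a = l ∧ a ∈ eta ∧
      (∀ b, 1 ≤ b → height etaNew b + (if b = a then 1 else 0)
        = height eta b + (if b = a + 1 then 1 else 0)) := by
  classical
  obtain ⟨B0, hB0⟩ : ∃ B0 : Ptn, B0 = (a + 1) ::ₘ (Multiset.replicate (l - 2) a +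
      (if a ≤ 1 then (0 : Ptn) else {a - 1})) := ⟨_, rfl⟩
  obtain ⟨F, hF⟩ : ∃ F : Ptn, F = Multiset.filter (fun b => b ≠ a) eta := ⟨_, rfl⟩
  have hnuca : nu.count a = 0 := Multiset.count_eq_zero.2 hanu
  have hcnt : eta.count a = l := by
    rw [hl, Multiset.count_add]
    omega
  have hmemE : a ∈ eta := Multiset.count_pos.1 (by omega)
  have h0 : eta ≠ 0 := by rintro rfl; simp at hmemE
  have hfilter_nu : Multiset.filter (fun b => b ≠ a) nu = nu :=
    Multiset.filter_eq_self.2 (fun b hb hba => hanu (hba ▸ hb))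
  have hzeq : zeta = nu + (B0 + F) := by
    rw [hzeta, Multiset.filter_add, hfilter_nu, ← hB0, ← hF]
    exact add_left_comm B0 nu F
  have heta_dec : eta = Multiset.replicate l a + F := by
    have h1 := Multiset.filter_add_not (fun b => b = a) eta
    have h2 : Multiset.filter (fun b => b = a) eta = Multiset.replicate l a := by
      rw [← hcnt]
      exact Multiset.filter_eq' eta a
    have h3 : Multiset.filter (fun b => ¬ b = a) eta = F := by
      rw [hF]
    rw [h2, h3] at h1
    exact h1.symm
  have htail : ∀ b, 1 ≤ b →
      height (if a ≤ 1 then (0 : Ptn) else {a - 1}) b = if b ≤ a - 1 then 1 else 0 := by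
    intro b hb
    by_cases hc : a ≤ 1
    · rw [if_pos hc, if_neg (by omega)]
      rfl
    · rw [if_neg hc]
      show height ((a - 1) ::ₘ 0) b = _
      rw [height_cons, height_zero, zero_add]
  have hB0h : ∀ b, 1 ≤ b → height B0 b
      = ((if b ≤ a then l - 2 else 0) + (if b ≤ a - 1 then 1 else 0))
        + (if b ≤ a + 1 then 1 else 0) := by
    intro b hb
    rw [hB0, height_cons, height_add, height_replicate, htail b hb]
  have hH : ∀ b, 1 ≤ b → height (B0 + F) b + (if b = a then 1 else 0)
      = height eta b + (if b = a + 1 then 1 else 0) := by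
    intro b hb
    have h1 : height (B0 + F) b = height B0 b + height F b := height_add _ _ _
    have h5 : height eta b = (if b ≤ a then l else 0) + height F b := by
      conv_lhs => rw [heta_dec]
      rw [height_add, height_replicate]
    rw [h1, hB0h b hb, h5]
    split_ifs <;> omega
  have hB0sum : B0.sum = l * a := by
    have hla : (l - 2) * a + 2 * a = l * a := by
      rw [← Nat.add_mul]
      congr 1
      omega
    rw [hB0, Multiset.sum_cons, Multiset.sum_add, Multiset.sum_replicate, smul_eq_mul]
    split_ifs with hc
    · have haa : a = 1 := by omega
      subst haa
      simp only [Multiset.sum_zero]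
      omega
    · rw [Multiset.sum_singleton]
      omega
  have hsum : (B0 + F).sum = eta.sum := by
    conv_rhs => rw [heta_dec]
    rw [Multiset.sum_add, Multiset.sum_add, hB0sum, Multiset.sum_replicate, smul_eq_mul]
  have hposN : IsPartition (B0 + F) := by
    intro b hb
    rcases Multiset.mem_add.1 hb with hb | hb
    · rw [hB0] at hb
      rcases Multiset.mem_cons.1 hb with rfl | hb
      · omega
      · rcases Multiset.mem_add.1 hb with hb | hb
        · have := Multiset.eq_of_mem_replicate hb
          omega
        · by_cases hc : a ≤ 1
          · rw [if_pos hc] at hb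
            simp at hb
          · rw [if_neg hc, Multiset.mem_singleton] at hb
            omega
    · exact hpose b (Multiset.mem_of_mem_filter (hF ▸ hb))
  have h0' : B0 + F ≠ 0 := by
    intro hc
    have : a + 1 ∈ B0 + F := Multiset.mem_add.2 (Or.inl (hB0 ▸ Multiset.mem_cons_self _ _))
    rw [hc] at this
    simp at this
  refine ⟨B0 + F, hzeq, ?_, ?_, hsum, hposN, h0', h0, hcnt, hmemE, hH⟩
  · rw [hzeq]
    exact add_tsub_cancel_left nu (B0 + F)
  · rw [hzeq]
    exact le_add_right (le_refl nu)

end Lemmas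

/-- Proposition 5.9 of the paper: partial specialization does not change `d_S`.  Here `a` is
the smallest part of `λ = ν + η` of the relevant parity and height whose ν-height is odd,
`l` its multiplicity, and `ζ` replaces the `l` copies of `a` by `a+1, a^{l-2}, a-1`. -/
theorem dS_of_partial_specialization (X : PType) (nu eta : Ptn) (a l : ℕ) (zeta : Ptn)
    (h : IsMarked X nu eta)
    (hr : Reduced X (nu + eta) nu)
    (hns : ¬ SpecialMP X (nu + eta) nu)
    (ha : a ∈ nu + eta ∧ AntiPart X (nu + eta) a ∧ Odd (height nu a) ∧
      ∀ b ∈ nu + eta, AntiPart X (nu + eta) b → Odd (height nu b) → a ≤ b)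
    (hl : l = (nu + eta).count a)
    (hzeta : zeta = ((a + 1) ::ₘ (Multiset.replicate (l - 2) a +
        (if a ≤ 1 then (0 : Ptn) else {a - 1}))) +
        Multiset.filter (fun b => b ≠ a) (nu + eta)) :
    nu ≤ zeta ∧ dS X nu (zeta - nu) = dS X nu eta := by
  classical
  obtain ⟨hmem, hanti, hnuh, hmin⟩ := ha
  obtain ⟨hInP, hsumpar, hnuprop, hnucard⟩ := h
  have hposl : IsPartition (nu + eta) := hInP.1
  have hpose : IsPartition eta := fun b hb => hposl b (Multiset.mem_add.2 (Or.inr hb))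
  have ha1 : 1 ≤ a := hposl a hmem
  have hlpos : 1 ≤ l := by
    rw [hl]
    exact Multiset.count_pos.2 hmem
  cases X with
  | C =>
    obtain ⟨haodd', hlamheven⟩ := hanti
    have haodd : a % 2 = 1 := Nat.odd_iff.1 haodd'
    have hanu : a ∉ nu := fun hc => by
      have hev : Even a := (hnuprop a hc).2
      rw [Nat.even_iff] at hev
      omega
    have hleven : l % 2 = 0 := by
      have he : Even ((nu + eta).count a) := hInP.2 a haodd'
      rw [Nat.even_iff] at he
      omega
    have hl2 : 2 ≤ l := by omega
    obtain ⟨etaNew, hzeq, hsub, hle, hsum, hposN, h0', h0, hcnt, hmemE, hH⟩ :=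
      main_common hzeta hanu hl hl2 ha1 hpose
    set t := height eta (a + 1) with ht
    have hha : height eta a = t + l := by
      have := height_count_succ eta a
      omega
    have hnuca : nu.count a = 0 := Multiset.count_eq_zero.2 hanu
    have hnuh' : height nu a % 2 = 1 := Nat.odd_iff.1 hnuh
    have hlamheven' : height (nu + eta) a % 2 = 0 := Nat.even_iff.1 hlamheven
    have hnuA1 : height nu (a + 1) = height nu a := by
      have := height_count_succ nu a
      omega
    have hlamA1 := height_count_succ (nu + eta) a
    have hcl : (nu + eta).count a = l := hl.symm
    have htodd : t % 2 = 1 := by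
      have h1 := height_add nu eta (a + 1)
      have h2 := height_add nu eta a
      omega
    have hSeta : (eta.filter (fun p => a ≤ p)).sum % 2 = 0 := by
      rw [filter_sum_mod_two]
      have hsplit : Multiset.card ((nu + eta).filter (fun p => p % 2 = 1 ∧ a ≤ p))
          = Multiset.card (nu.filter (fun p => p % 2 = 1 ∧ a ≤ p))
            + Multiset.card (eta.filter (fun p => p % 2 = 1 ∧ a ≤ p)) := by
        rw [Multiset.filter_add, Multiset.card_add]
      have hnu0 : nu.filter (fun p => p % 2 = 1 ∧ a ≤ p) = 0 := by
        rw [Multiset.filter_eq_nil]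
        intro p hp hcon
        have hev : Even p := (hnuprop p hp).2
        rw [Nat.even_iff] at hev
        omega
      have hlamEv : Even (Multiset.card ((nu + eta).filter (fun p => p % 2 = 1 ∧ a ≤ p))) := by
        apply even_card_filter
        intro b hb
        exact hInP.2 b (Nat.odd_iff.2 hb.1)
      rw [Nat.even_iff] at hlamEv
      rw [hnu0, Multiset.card_zero] at hsplit
      omega
    have haM : a ≤ maxPart eta := le_maxPart hmemE
    have hinner : collapse PType.B (up etaNew) = collapse PType.B (up eta) := by
      apply collapse_congr
      · rw [sum_up h0', sum_up h0, hsum]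
      · intro m hmP hms
        have hm : ∀ b : ℕ, Even b → Even (m.count b) := fun b hb => hmP.2 b hb
        exact (core_C h0 h0' ha1 haodd hl2 hleven hha ht.symm haM hsum hH htodd hSeta m hm).symm
    refine ⟨hle, ?_⟩
    rw [hsub]
    show collapse PType.B (transpose (nu + collapse PType.B (up etaNew)))
        = collapse PType.B (transpose (nu + collapse PType.B (up eta)))
    rw [hinner]
  | B =>
    obtain ⟨haev', hlamhodd⟩ := hanti
    have haeven : a % 2 = 0 := Nat.even_iff.1 haev'
    have hanu : a ∉ nu := fun hc => by
      have hodd : Odd a := (hnuprop a hc).2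
      rw [Nat.odd_iff] at hodd
      omega
    have hleven : l % 2 = 0 := by
      have he : Even ((nu + eta).count a) := hInP.2 a haev'
      rw [Nat.even_iff] at he
      omega
    have hl2 : 2 ≤ l := by omega
    have ha2 : 2 ≤ a := by omega
    obtain ⟨etaNew, hzeq, hsub, hle, hsum, hposN, h0', h0, hcnt, hmemE, hH⟩ :=
      main_common hzeta hanu hl hl2 ha1 hpose
    set t := height eta (a + 1) with ht
    have hha : height eta a = t + l := by
      have := height_count_succ eta a
      omega
    have hnuca : nu.count a = 0 := Multiset.count_eq_zero.2 hanu
    have hnuh' : height nu a % 2 = 1 := Nat.odd_iff.1 hnuh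
    have hlamhodd' : height (nu + eta) a % 2 = 1 := Nat.odd_iff.1 hlamhodd
    have hSeta : (eta.filter (fun p => a ≤ p)).sum % 2 = 0 := by
      rw [filter_sum_mod_two]
      have hsplit : Multiset.card ((nu + eta).filter (fun p => p % 2 = 1 ∧ a ≤ p))
          = Multiset.card (nu.filter (fun p => p % 2 = 1 ∧ a ≤ p))
            + Multiset.card (eta.filter (fun p => p % 2 = 1 ∧ a ≤ p)) := by
        rw [Multiset.filter_add, Multiset.card_add]
      have hnuval : Multiset.card (nu.filter (fun p => p % 2 = 1 ∧ a ≤ p)) = height nu a := by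
        unfold height
        apply card_filter_ext
        intro x hx
        have hodd : Odd x := (hnuprop x hx).2
        rw [Nat.odd_iff] at hodd
        constructor
        · rintro ⟨_, hh⟩; exact hh
        · intro hh; exact ⟨hodd, hh⟩
      have hlamsplit := height_split_parity (nu + eta) a
      have hlamEvenPart : Even (Multiset.card
          ((nu + eta).filter (fun p => ¬ (p % 2 = 1) ∧ a ≤ p))) := by
        apply even_card_filter
        intro b hb
        exact hInP.2 b (Nat.even_iff.2 (by omega))
      rw [Nat.even_iff] at hlamEvenPart
      omega
    have hm0a : minPart eta ≤ a := minPart_le hmemE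
    have hinner : collapse PType.C (down etaNew) = collapse PType.C (down eta) := by
      apply collapse_congr
      · have s1 := sum_down hposN h0'
        have s2 := sum_down hpose h0
        omega
      · intro m hmP hms
        have hm : ∀ b : ℕ, ¬ Even b → Even (m.count b) := fun b hb =>
          hmP.2 b (Nat.odd_iff.2 (by rw [Nat.even_iff] at hb; omega))
        exact (core_B hpose hposN h0 h0' ha2 haeven hl2 hleven hha ht.symm hm0a
          hsum hH hSeta m hm).symm
    refine ⟨hle, ?_⟩
    rw [hsub]
    show collapse PType.C (transpose (nu + collapse PType.C (down etaNew)))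
        = collapse PType.C (transpose (nu + collapse PType.C (down eta)))
    rw [hinner]
  | D =>
    obtain ⟨haev', hlamhev⟩ := hanti
    have haeven : a % 2 = 0 := Nat.even_iff.1 haev'
    have hanu : a ∉ nu := fun hc => by
      have hodd : Odd a := (hnuprop a hc).2
      rw [Nat.odd_iff] at hodd
      omega
    have hleven : l % 2 = 0 := by
      have he : Even ((nu + eta).count a) := hInP.2 a haev'
      rw [Nat.even_iff] at he
      omega
    have hl2 : 2 ≤ l := by omega
    obtain ⟨etaNew, hzeq, hsub, hle, hsum, hposN, h0', h0, hcnt, hmemE, hH⟩ :=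
      main_common hzeta hanu hl hl2 ha1 hpose
    set t := height eta (a + 1) with ht
    have hha : height eta a = t + l := by
      have := height_count_succ eta a
      omega
    have hnuca : nu.count a = 0 := Multiset.count_eq_zero.2 hanu
    have hnuh' : height nu a % 2 = 1 := Nat.odd_iff.1 hnuh
    have hlamhev' : height (nu + eta) a % 2 = 0 := Nat.even_iff.1 hlamhev
    have hOddLt : Multiset.card (eta.filter (fun x => x % 2 = 1 ∧ ¬ a ≤ x)) % 2 = 1 := by
      -- total odd count in eta is even
      have hsplitOdd : Multiset.card ((nu + eta).filter (fun p => p % 2 = 1))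
          = Multiset.card (nu.filter (fun p => p % 2 = 1))
            + Multiset.card (eta.filter (fun p => p % 2 = 1)) := by
        rw [Multiset.filter_add, Multiset.card_add]
      have hnuodd_all : Multiset.card (nu.filter (fun p => p % 2 = 1)) = Multiset.card nu := by
        rw [Multiset.filter_eq_self.2 ?_]
        intro p hp
        have hodd : Odd p := (hnuprop p hp).2
        rwa [Nat.odd_iff] at hodd
      have hcardnu : Multiset.card nu % 2 = 0 := by
        have := hnucard (Or.inr rfl)
        rwa [Nat.even_iff] at this
      have hsum_even : (nu + eta).sum % 2 = 0 := by
        have : Even (nu + eta).sum := hsumpar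
        rwa [Nat.even_iff] at this
      have hmod := sum_mod_two (nu + eta)
      -- odd parts ≥ a
      have hsplitGe : Multiset.card ((nu + eta).filter (fun p => p % 2 = 1 ∧ a ≤ p))
          = Multiset.card (nu.filter (fun p => p % 2 = 1 ∧ a ≤ p))
            + Multiset.card (eta.filter (fun p => p % 2 = 1 ∧ a ≤ p)) := by
        rw [Multiset.filter_add, Multiset.card_add]
      have hnuval : Multiset.card (nu.filter (fun p => p % 2 = 1 ∧ a ≤ p)) = height nu a := by
        unfold height
        apply card_filter_ext
        intro x hx
        have hodd : Odd x := (hnuprop x hx).2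
        rw [Nat.odd_iff] at hodd
        constructor
        · rintro ⟨_, hh⟩; exact hh
        · intro hh; exact ⟨hodd, hh⟩
      have hlamsplit := height_split_parity (nu + eta) a
      have hlamEvenPart : Even (Multiset.card
          ((nu + eta).filter (fun p => ¬ (p % 2 = 1) ∧ a ≤ p))) := by
        apply even_card_filter
        intro b hb
        exact hInP.2 b (Nat.even_iff.2 (by omega))
      rw [Nat.even_iff] at hlamEvenPart
      -- split odd = (odd ∧ ≥ a) + (odd ∧ < a) inside eta
      have hsplit2 := card_filter_split eta (fun p => p % 2 = 1) (fun p => a ≤ p)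
      have he1 : Multiset.card (eta.filter (fun x => a ≤ x ∧ x % 2 = 1))
          = Multiset.card (eta.filter (fun p => p % 2 = 1 ∧ a ≤ p)) := by
        apply card_filter_ext
        intro x _
        constructor
        · rintro ⟨h1, h2⟩; exact ⟨h2, h1⟩
        · rintro ⟨h1, h2⟩; exact ⟨h2, h1⟩
      have he2 : Multiset.card (eta.filter (fun x => ¬ a ≤ x ∧ x % 2 = 1))
          = Multiset.card (eta.filter (fun x => x % 2 = 1 ∧ ¬ a ≤ x)) := by
        apply card_filter_ext
        intro x _
        constructor
        · rintro ⟨h1, h2⟩; exact ⟨h2, h1⟩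
        · rintro ⟨h1, h2⟩; exact ⟨h2, h1⟩
      omega
    have hinner : collapse PType.D (transpose etaNew) = collapse PType.D (transpose eta) := by
      apply collapse_congr
      · rw [transpose_sum, transpose_sum, hsum]
      · intro m hmP hms
        have hm : ∀ b : ℕ, Even b → Even (m.count b) := fun b hb => hmP.2 b hb
        exact (core_D hpose ha1 haeven hl2 hha ht.symm hsum hH hOddLt m hm).symm
    refine ⟨hle, ?_⟩
    rw [hsub]
    show collapse PType.D (transpose (nu + transpose (collapse PType.D (transpose etaNew))))
        = collapse PType.D (transpose (nu + transpose (collapse PType.D (transpose eta))))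
    rw [hinner]

end NilDual
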